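/- Let $\theta \ge 0$ be real and let $1 \le l \le n$ be integers with $l(l+\theta-1) > 0$. Then $\int_0^{\infty} q^{\theta}_{n,l}(t)\, dt = \frac{2}{l(l+\theta-1)}$. (This is the expected total time during which the ancestral process $A_n^{\theta}$ spends in state $l$.) -/

import Mathlib

/-!
Integrating term by term, `∫₀^∞ q^θ_{n,l} = ∑_{j=l}^n c_j(n) / λ_j` with `λ_j = j(j+θ-1)/2`, where
`c_j(n) = w_j · n^{[j]}/(n+θ)^{(j)}` and `w_j` is `qWeight θ l j`. The identity
`∑_{j=l}^n c_j(n) / (j(j+θ-1)) = 1/(l(l+θ-1))` is proved by induction on `n`. Passing from `n` to `n+1` changes `n^{[j]}/(n+θ)^{(j)}` by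
`j(j+θ-1) n^{[j-1]} / ((n+θ)(n+1+θ)^{(j)})`; the factor `j(j+θ-1)` cancels the denominator, and
the remaining alternating sum telescopes, its partial sums being `qTelescope`.
-/

open Finset MeasureTheory

/-- Rising factorial `x^{(m)} = x (x+1) ⋯ (x+m-1)` of a real number. -/
noncomputable def risingFac (x : ℝ) (m : ℕ) : ℝ := ∏ i ∈ Finset.range m, (x + i)

/-- Falling factorial `n^{[j]} = n (n-1) ⋯ (n-j+1)` of a natural number, as a real. -/
noncomputable def fallingFac (n : ℕ) (j : ℕ) : ℝ := ∏ i ∈ Finset.range j, ((n : ℝ) - i)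

/-- `q θ n k t = P(A_n^θ(t) = k)`. -/
noncomputable def q (θ : ℝ) (n k : ℕ) (t : ℝ) : ℝ :=
  ∑ j ∈ Finset.Icc k n,
    Real.exp (-(j * (j + θ - 1) * t) / 2) * (-1 : ℝ) ^ (j - k) *
      ((2 * j + θ - 1) * risingFac (k + θ) (j - 1)) /
        ((Nat.factorial k : ℝ) * (Nat.factorial (j - k) : ℝ)) *
      (fallingFac n j / risingFac (n + θ) j)

open Nat

lemma risingFac_succ (x : ℝ) (m : ℕ) : risingFac x (m + 1) = risingFac x m * (x + m) :=
  prod_range_succ _ _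

lemma risingFac_succ' (x : ℝ) (m : ℕ) : risingFac x (m + 1) = x * risingFac (x + 1) m := by
  rw [risingFac, prod_range_succ', risingFac, mul_comm]
  push_cast
  simp only [add_zero, add_assoc, add_comm (1 : ℝ)]

lemma risingFac_pos {x : ℝ} (hx : 0 < x) (m : ℕ) : 0 < risingFac x m :=
  prod_pos fun i _ => by positivity

lemma fallingFac_succ (n m : ℕ) : fallingFac n (m + 1) = fallingFac n m * (n - m) :=
  prod_range_succ _ _

lemma fallingFac_succ_succ (n m : ℕ) : fallingFac (n + 1) (m + 1) = (n + 1) * fallingFac n m := by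
  rw [fallingFac, prod_range_succ', fallingFac, mul_comm]
  push_cast
  simp only [sub_zero, add_sub_add_right_eq_sub]

lemma fallingFac_self (n : ℕ) : fallingFac n n = n ! := by
  induction n with
  | zero => simp [fallingFac]
  | succ n ih => rw [fallingFac_succ_succ, ih, Nat.factorial_succ]; push_cast; ring

lemma fallingFac_self_succ (n : ℕ) : fallingFac n (n + 1) = 0 := by
  simp [fallingFac_succ]

lemma fallingFac_div_risingFac_succ_sub {n : ℕ} {θ : ℝ} (hnθ : 0 < n + θ) (i : ℕ) :
    fallingFac (n + 1) (i + 1) / risingFac (n + 1 + θ) (i + 1)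
      - fallingFac n (i + 1) / risingFac (n + θ) (i + 1)
      = (i + 1) * (i + θ) * fallingFac n i / ((n + θ) * risingFac (n + 1 + θ) (i + 1)) := by
  have hR := (risingFac_pos (x := n + 1 + θ) (by linarith) i).ne'
  have hlast : (n : ℝ) + 1 + θ + i ≠ 0 := by have := i.cast_nonneg (α := ℝ); linarith
  rw [fallingFac_succ_succ, fallingFac_succ, risingFac_succ, risingFac_succ',
    show (n : ℝ) + θ + 1 = n + 1 + θ by ring]
  field_simp
  ring

noncomputable def qWeight (θ : ℝ) (k j : ℕ) : ℝ :=
  (-1) ^ (j - k) * ((2 * j + θ - 1) * risingFac (k + θ) (j - 1)) / (k ! * (j - k)!)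

noncomputable def qTelescope (θ : ℝ) (l n j : ℕ) : ℝ :=
  (-1) ^ (j - l) * (j - l : ℕ) * risingFac (l + θ) (j - 1) * fallingFac n (j - 1) /
    (l ! * (j - l)! * risingFac (n + 1 + θ) (j - 1))

lemma qTelescope_self (θ : ℝ) (l n : ℕ) : qTelescope θ l n l = 0 := by
  simp [qTelescope]

lemma qTelescope_add_two (θ : ℝ) (l n : ℕ) : qTelescope θ l n (n + 2) = 0 := by
  simp [qTelescope, fallingFac_self_succ]

lemma qTelescope_sub_succ {θ : ℝ} {l n j : ℕ} (hnθ : 0 < n + 1 + θ) (hl : 1 ≤ l)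
    (hlj : l ≤ j) :
    qTelescope θ l n j - qTelescope θ l n (j + 1)
      = (n + 1 - l) * qWeight θ l j * fallingFac n (j - 1) / risingFac (n + 1 + θ) j := by
  obtain ⟨m, rfl⟩ : ∃ m, l = m + 1 := ⟨l - 1, by omega⟩
  obtain ⟨d, rfl⟩ : ∃ d, j = m + d + 1 := ⟨j - (m + 1), by omega⟩
  simp only [qTelescope, qWeight, show m + d + 1 - (m + 1) = d by omega,
    show m + d + 1 + 1 - (m + 1) = d + 1 by omega, add_tsub_cancel_right]
  have hR := (risingFac_pos hnθ (m + d)).ne'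
  have hlast : (n : ℝ) + 1 + θ + (m + d : ℕ) ≠ 0 := by
    have := (m + d).cast_nonneg (α := ℝ); linarith
  rw [risingFac_succ _ (m + d), risingFac_succ _ (m + d), fallingFac_succ, factorial_succ d,
    pow_succ]
  push_cast at hlast ⊢
  field_simp
  ring

lemma qWeight_mul_div_rate_succ_sub {θ : ℝ} {l n j : ℕ} (hl : 1 ≤ l) (hlθ : 0 < l + θ - 1)
    (hln : l ≤ n) (hlj : l ≤ j) :
    qWeight θ l j * (fallingFac (n + 1) j / risingFac ((n + 1 : ℕ) + θ) j) / (j * (j + θ - 1))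
      - qWeight θ l j * (fallingFac n j / risingFac (n + θ) j) / (j * (j + θ - 1))
      = (qTelescope θ l n j - qTelescope θ l n (j + 1)) / ((n + 1 - l) * (n + θ)) := by
  obtain ⟨i, rfl⟩ : ∃ i, j = i + 1 := ⟨j - 1, by omega⟩
  have hln' : (l : ℝ) ≤ n := by exact_mod_cast hln
  have hlj' : (l : ℝ) ≤ i + 1 := by exact_mod_cast hlj
  have hnθ : 0 < (n : ℝ) + θ := by linarith
  have hiθ : (i : ℝ) + θ ≠ 0 := by linarith
  have hnl : (n : ℝ) + 1 - l ≠ 0 := by linarith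
  have hR := (risingFac_pos (x := n + 1 + θ) (by linarith) (i + 1)).ne'
  rw [← sub_div, ← mul_sub, Nat.cast_succ, fallingFac_div_risingFac_succ_sub hnθ,
    qTelescope_sub_succ (by linarith) hl hlj, add_tsub_cancel_right,
    show ((i + 1 : ℕ) : ℝ) + θ - 1 = i + θ by push_cast; ring]
  push_cast
  field_simp

theorem sum_qWeight_mul_div_rate {θ : ℝ} {l n : ℕ} (hl : 1 ≤ l) (hlθ : 0 < l + θ - 1)
    (hln : l ≤ n) :
    ∑ j ∈ Icc l n, qWeight θ l j * (fallingFac n j / risingFac (n + θ) j) / (j * (j + θ - 1))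
      = 1 / (l * (l + θ - 1)) := by
  induction n, hln using Nat.le_induction with
  | base =>
    obtain ⟨m, rfl⟩ : ∃ m, l = m + 1 := ⟨l - 1, by omega⟩
    have hR := (risingFac_pos (x := (m + 1 : ℕ) + θ) (by linarith) m).ne'
    have hlast : ((m + 1 : ℕ) : ℝ) + θ + m ≠ 0 := by
      have := m.cast_nonneg (α := ℝ); linarith
    rw [Icc_self, sum_singleton, qWeight, fallingFac_self, risingFac_succ,
      add_tsub_cancel_right, Nat.sub_self]
    push_cast at hR hlast ⊢
    field_simp
    ring
  | succ n hln ih =>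
    set S : ℕ → ℕ → ℝ := fun m j ↦
      qWeight θ l j * (fallingFac m j / risingFac (m + θ) j) / (j * (j + θ - 1))
    have hlast : S n (n + 1) = 0 := by simp [S, fallingFac_self_succ]
    have htelescope :
        ∑ j ∈ Icc l (n + 1), (qTelescope θ l n j - qTelescope θ l n (j + 1)) = 0 := by
      rw [← neg_eq_zero, ← sum_neg_distrib]
      simp only [neg_sub]
      rw [sum_Icc_sub (by omega), qTelescope_add_two, qTelescope_self, sub_zero]
    have hstep : ∑ j ∈ Icc l (n + 1), (S (n + 1) j - S n j) = 0 := by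
      rw [sum_congr rfl fun j hj ↦
          qWeight_mul_div_rate_succ_sub hl hlθ hln (mem_Icc.1 hj).1, ← sum_div, htelescope,
        zero_div]
    calc ∑ j ∈ Icc l (n + 1), S (n + 1) j
        = ∑ j ∈ Icc l (n + 1), S n j + ∑ j ∈ Icc l (n + 1), (S (n + 1) j - S n j) := by
          rw [← sum_add_distrib]; simp only [add_sub_cancel]
      _ = 1 / (l * (l + θ - 1)) := by
          rw [hstep, add_zero, sum_Icc_succ_top (by omega), hlast, add_zero, ih]

lemma q_eq_sum_exp (θ : ℝ) (n k : ℕ) (t : ℝ) :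
    q θ n k t = ∑ j ∈ Icc k n, Real.exp (-(j * (j + θ - 1) / 2) * t)
      * (qWeight θ k j * (fallingFac n j / risingFac (n + θ) j)) := by
  refine sum_congr rfl fun j _ ↦ ?_
  rw [qWeight, show -(j * (j + θ - 1) * t) / 2 = -(j * (j + θ - 1) / 2) * t by ring]
  ring

lemma integral_exp_neg_mul_mul_Ioi {b : ℝ} (hb : 0 < b) (c : ℝ) :
    ∫ t in Set.Ioi 0, Real.exp (-b * t) * c = c / b := by
  rw [integral_mul_const, integral_exp_mul_Ioi (neg_neg_of_pos hb), mul_zero, Real.exp_zero]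
  field_simp

lemma integrableOn_exp_neg_mul_mul_Ioi {b : ℝ} (hb : 0 < b) (c : ℝ) :
    IntegrableOn (fun t ↦ Real.exp (-b * t) * c) (Set.Ioi 0) :=
  (integrableOn_exp_mul_Ioi (neg_neg_of_pos hb) 0).mul_const c

theorem stmt_9_general (θ : ℝ) (n l : ℕ) (hl : 1 ≤ l) (hln : l ≤ n)
    (hrate : 0 < (l : ℝ) * ((l : ℝ) + θ - 1)) :
    ∫ t in Set.Ioi (0:ℝ), q θ n l t = 2 / ((l : ℝ) * ((l : ℝ) + θ - 1)) := by
  have hlθ : 0 < (l : ℝ) + θ - 1 := (pos_iff_pos_of_mul_pos hrate).1 (by exact_mod_cast hl)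
  have hrates : ∀ j ∈ Icc l n, 0 < (j : ℝ) * (j + θ - 1) / 2 := fun j hj ↦ by
    have hlj : l ≤ j := (mem_Icc.1 hj).1
    have : (l : ℝ) ≤ j := by exact_mod_cast hlj
    have : (0 : ℝ) < j := by exact_mod_cast (by omega : 0 < j)
    have : (0 : ℝ) < j + θ - 1 := by linarith
    positivity
  simp_rw [q_eq_sum_exp]
  rw [integral_finsetSum _ fun j hj ↦ integrableOn_exp_neg_mul_mul_Ioi (hrates j hj) _,
    sum_congr rfl fun j hj ↦ integral_exp_neg_mul_mul_Ioi (hrates j hj) _,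
    show 2 / ((l : ℝ) * (l + θ - 1)) = 2 * (1 / (l * (l + θ - 1))) by ring,
    ← sum_qWeight_mul_div_rate hl hlθ hln, mul_sum]
  exact sum_congr rfl fun j _ ↦ by rw [div_div_eq_mul_div]; ring

/-- The expected total time the ancestral process spends in state `l`:
`∫_0^∞ q^θ_{n,l}(t) dt = 2/(l(l+θ-1))`. -/
theorem stmt_9 (θ : ℝ) (hθ : 0 ≤ θ) (n l : ℕ) (hl : 1 ≤ l) (hln : l ≤ n)
    (hrate : 0 < (l : ℝ) * ((l : ℝ) + θ - 1)) :
    ∫ t in Set.Ioi (0:ℝ), q θ n l t = 2 / ((l : ℝ) * ((l : ℝ) + θ - 1)) :=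
  stmt_9_general θ n l hl hln hrate
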